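/- arXiv:2510.16232 — 3 statements merged into one kernel-verified Lean document; each statement's English description precedes it below -/
import Mathlib

section
/- Let A : S → ℝ^{d×d} be a bounded measurable matrix-valued function with ‖A(s)‖ ≤ G_A, let μ be a probability measure, D(s) = sqrt(A(s)ᵀA(s)), D̄ = ∫ D dμ, Ā = ∫ A dμ, and suppose ‖D̄ Ā⁻¹‖ ≤ ν. Then for any vector v ∈ ℝ^d with ‖v‖ ≤ 2G_x, ∫ ‖A(s)v‖² dμ(s) ≤ 2·G_A·G_x·ν·‖Ā v‖. -/
/-!
For each `s`, the identity `D(s)² = A(s)ᵀA(s)` gives `‖A(s) v‖ = ‖D(s) v‖` and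
`‖A(s)‖ = ‖D(s)‖`, and Cauchy–Schwarz for the positive form `⟪D(s) ·, ·⟫` gives
`‖D(s) v‖² ≤ ‖D(s)‖ ⟪D(s) v, v⟫`. Hence `𝔼 ‖A(s) v‖² ≤ G_A ⟪D̄ v, v⟫ ≤ G_A ‖D̄ v‖ ‖v‖`,
and `‖D̄ v‖ = ‖D̄ Ā⁻¹ (Ā v)‖ ≤ ν ‖Ā v‖`.
-/

open MeasureTheory
open scoped RealInnerProductSpace

namespace ContinuousLinearMap

section Normed

variable {𝕜 E F G : Type*} [NontriviallyNormedField 𝕜]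
  [SeminormedAddCommGroup E] [NormedSpace 𝕜 E] [SeminormedAddCommGroup F] [NormedSpace 𝕜 F]
  [SeminormedAddCommGroup G] [NormedSpace 𝕜 G]

theorem norm_apply_le_norm_comp_mul_of_comp_eq_id {T : E →L[𝕜] F} {M : E →L[𝕜] G}
    {B : G →L[𝕜] E} (hBM : B ∘L M = .id 𝕜 E) (x : E) :
    ‖T x‖ ≤ ‖T ∘L B‖ * ‖M x‖ :=
  calc ‖T x‖ = ‖(T ∘L B) (M x)‖ := by rw [comp_apply, ← comp_apply B, hBM, id_apply]
    _ ≤ ‖T ∘L B‖ * ‖M x‖ := le_opNorm _ _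

end Normed

variable {E F G : Type*} [NormedAddCommGroup E] [InnerProductSpace ℝ E]
  [NormedAddCommGroup F] [InnerProductSpace ℝ F] [NormedAddCommGroup G] [InnerProductSpace ℝ G]

theorem IsPositive.norm_apply_sq_le {T : E →L[ℝ] E} (hT : T.IsPositive) (x : E) :
    ‖T x‖ ^ 2 ≤ ‖T‖ * ⟪T x, x⟫ := by
  -- Cauchy–Schwarz for the positive form `⟪T ·, ·⟫` at the pair `(x, T x)`
  have cauchy_schwarz := LinearMap.BilinForm.apply_mul_apply_le_of_forall_zero_le
    ((innerₗ E).comp (T : E →ₗ[ℝ] E)) hT.inner_nonneg_left x (T x)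
  simp only [LinearMap.comp_apply, coe_coe, innerₗ_apply_apply] at cauchy_schwarz
  rw [hT.inner_left_eq_inner_right (T x) x, real_inner_self_eq_norm_sq] at cauchy_schwarz
  have hTTx : ⟪T (T x), T x⟫ ≤ ‖T‖ * ‖T x‖ ^ 2 :=
    calc ⟪T (T x), T x⟫ ≤ ‖T (T x)‖ * ‖T x‖ := real_inner_le_norm _ _
      _ ≤ ‖T‖ * ‖T x‖ * ‖T x‖ := by gcongr; exact T.le_opNorm _
      _ = ‖T‖ * ‖T x‖ ^ 2 := by ring
  rcases (sq_nonneg ‖T x‖).eq_or_lt with hzero | hpos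
  · rw [← hzero]
    exact mul_nonneg (norm_nonneg _) (hT.inner_nonneg_left x)
  · refine le_of_mul_le_mul_right ?_ hpos
    nlinarith [hT.inner_nonneg_left x]

theorem integral_inner_apply [CompleteSpace F] {S : Type*} [MeasurableSpace S] {μ : Measure S}
    {T : S → E →L[ℝ] F} (hT : Integrable T μ) (x : E) (y : F) :
    ∫ s, ⟪T s x, y⟫ ∂μ = ⟪(∫ s, T s ∂μ) x, y⟫ := by
  simp_rw [real_inner_comm y]
  rw [integral_inner (hT.apply_continuousLinearMap x), integral_apply hT]

variable [CompleteSpace E] [CompleteSpace F] [CompleteSpace G]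

theorem norm_apply_eq_of_adjoint_comp_self_eq {T : E →L[ℝ] F} {S : E →L[ℝ] G}
    (h : adjoint T ∘L T = adjoint S ∘L S) (x : E) : ‖T x‖ = ‖S x‖ := by
  rw [← sq_eq_sq₀ (norm_nonneg _) (norm_nonneg _), apply_norm_sq_eq_inner_adjoint_left,
    apply_norm_sq_eq_inner_adjoint_left, h]

theorem norm_eq_of_adjoint_comp_self_eq {T : E →L[ℝ] F} {S : E →L[ℝ] G}
    (h : adjoint T ∘L T = adjoint S ∘L S) : ‖T‖ = ‖S‖ := by
  rw [← mul_self_inj (norm_nonneg _) (norm_nonneg _), ← norm_adjoint_comp_self,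
    ← norm_adjoint_comp_self, h]

theorem norm_apply_sq_le_of_comp_self_eq_adjoint_comp {D : E →L[ℝ] E} {A : E →L[ℝ] F}
    (hD : D.IsPositive) (h : D ∘L D = adjoint A ∘L A) (x : E) :
    ‖A x‖ ^ 2 ≤ ‖A‖ * ⟪D x, x⟫ := by
  have h' : adjoint D ∘L D = adjoint A ∘L A := by rw [hD.isSelfAdjoint.adjoint_eq, h]
  simpa only [norm_apply_eq_of_adjoint_comp_self_eq h', norm_eq_of_adjoint_comp_self_eq h']
    using hD.norm_apply_sq_le x

end ContinuousLinearMap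

theorem noise_alignment_variance_bound_general
    {S : Type*} [MeasurableSpace S] (μ : Measure S) [IsProbabilityMeasure μ]
    {d : ℕ}
    (A D : S → EuclideanSpace ℝ (Fin d) →L[ℝ] EuclideanSpace ℝ (Fin d))
    (hDint : Integrable D μ)
    (GA Gx ν : ℝ) (hGA : ∀ s, ‖A s‖ ≤ GA)
    -- D(s) is the positive semidefinite square root of A(s)ᵀA(s)
    (hDsa : ∀ s, IsSelfAdjoint (D s))
    (hDpos : ∀ s x, 0 ≤ ⟪D s x, x⟫)
    (hDsq : ∀ s, (D s).comp (D s) =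
      (ContinuousLinearMap.adjoint (A s)).comp (A s))
    -- Ā is invertible with inverse B and ‖D̄ Ā⁻¹‖ ≤ ν
    (B : EuclideanSpace ℝ (Fin d) →L[ℝ] EuclideanSpace ℝ (Fin d))
    (hBA : B.comp (∫ s, A s ∂μ) = ContinuousLinearMap.id ℝ _)
    (hν : ‖(∫ s, D s ∂μ).comp B‖ ≤ ν)
    (v : EuclideanSpace ℝ (Fin d)) (hv : ‖v‖ ≤ 2 * Gx) :
    (∫ s, ‖A s v‖ ^ 2 ∂μ) ≤ 2 * GA * Gx * ν * ‖(∫ s, A s ∂μ) v‖ := by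
  have hDpositive s : (D s).IsPositive :=
    (ContinuousLinearMap.isPositive_iff' _).2 ⟨hDsa s, hDpos s⟩
  have hGA0 : 0 ≤ GA :=
    (norm_nonneg _).trans (hGA (nonempty_of_isProbabilityMeasure μ).some)
  have hpointwise s : ‖A s v‖ ^ 2 ≤ GA * ⟪D s v, v⟫ :=
    (ContinuousLinearMap.norm_apply_sq_le_of_comp_self_eq_adjoint_comp (hDpositive s) (hDsq s)
      v).trans (mul_le_mul_of_nonneg_right (hGA s) ((hDpositive s).inner_nonneg_left v))
  have hDbar : ‖(∫ s, D s ∂μ) v‖ ≤ ν * ‖(∫ s, A s ∂μ) v‖ :=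
    (ContinuousLinearMap.norm_apply_le_norm_comp_mul_of_comp_eq_id hBA v).trans (by gcongr)
  calc ∫ s, ‖A s v‖ ^ 2 ∂μ ≤ ∫ s, GA * ⟪D s v, v⟫ ∂μ :=
        integral_mono_of_nonneg (.of_forall fun _ => by positivity)
          ((hDint.apply_continuousLinearMap v).inner_const v |>.const_mul GA)
          (.of_forall hpointwise)
    _ = GA * ⟪(∫ s, D s ∂μ) v, v⟫ := by
        rw [integral_const_mul, ContinuousLinearMap.integral_inner_apply hDint]
    _ ≤ GA * (‖(∫ s, D s ∂μ) v‖ * ‖v‖) := by gcongr; exact real_inner_le_norm _ _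
    _ ≤ GA * ((ν * ‖(∫ s, A s ∂μ) v‖) * (2 * Gx)) := by
        gcongr
        exact (norm_nonneg _).trans hDbar
    _ = 2 * GA * Gx * ν * ‖(∫ s, A s ∂μ) v‖ := by ring

/-- Effective affinity via the stochastic condition number: with `D(s)` the PSD polar factor
of `A(s)`, `ν ≥ ‖D̄ Ā⁻¹‖` and `‖v‖ ≤ 2G_x`, one has
`∫ ‖A(s)v‖² dμ ≤ 2 G_A G_x ν ‖Ā v‖`. -/
theorem noise_alignment_variance_bound
    {S : Type*} [MeasurableSpace S] (μ : Measure S) [IsProbabilityMeasure μ]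
    {d : ℕ}
    (A D : S → EuclideanSpace ℝ (Fin d) →L[ℝ] EuclideanSpace ℝ (Fin d))
    (hAint : Integrable A μ) (hDint : Integrable D μ)
    (GA Gx ν : ℝ) (hGA : ∀ s, ‖A s‖ ≤ GA)
    -- D(s) is the positive semidefinite square root of A(s)ᵀA(s)
    (hDsa : ∀ s, IsSelfAdjoint (D s))
    (hDpos : ∀ s x, 0 ≤ ⟪D s x, x⟫)
    (hDsq : ∀ s, (D s).comp (D s) =
      (ContinuousLinearMap.adjoint (A s)).comp (A s))
    -- Ā is invertible with inverse B and ‖D̄ Ā⁻¹‖ ≤ ν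
    (B : EuclideanSpace ℝ (Fin d) →L[ℝ] EuclideanSpace ℝ (Fin d))
    (hAB : (∫ s, A s ∂μ).comp B = ContinuousLinearMap.id ℝ _)
    (hBA : B.comp (∫ s, A s ∂μ) = ContinuousLinearMap.id ℝ _)
    (hν : ‖(∫ s, D s ∂μ).comp B‖ ≤ ν)
    (v : EuclideanSpace ℝ (Fin d)) (hv : ‖v‖ ≤ 2 * Gx) (hGx : 0 ≤ Gx)
    (hint : Integrable (fun s => ‖A s v‖ ^ 2) μ) :
    (∫ s, ‖A s v‖ ^ 2 ∂μ) ≤ 2 * GA * Gx * ν * ‖(∫ s, A s ∂μ) v‖ :=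
  noise_alignment_variance_bound_general μ A D hDint GA Gx ν hGA hDsa hDpos hDsq B hBA hν v hv
end

section
/- Let Ā be a d×d real matrix and let U : S → O(d) be a measurable map into orthogonal matrices with ∫ U dμ = 0 and ‖U(s)‖ ≤ ε for all s. Define A(s) = (I + U(s))·Ā and assume Ā is invertible. Then with D(s) = sqrt(A(s)ᵀA(s)) and D̄ = ∫ D dμ, the stochastic condition number satisfies ‖D̄ Ā⁻¹‖ ≤ 1 + ε. -/
open MeasureTheory
open scoped RealInnerProductSpace

/-- Multiplicative noise: with `A(s) = (I + U(s))Ā`, zero-mean `U` with `‖U(s)‖ ≤ ε`,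
the stochastic condition number satisfies `‖D̄ Ā⁻¹‖ ≤ 1 + ε`. -/
theorem multiplicative_noise_condition_number
    {S : Type*} [MeasurableSpace S] (μ : Measure S) [IsProbabilityMeasure μ]
    {d : ℕ}
    (Abar : EuclideanSpace ℝ (Fin d) →L[ℝ] EuclideanSpace ℝ (Fin d))
    (B : EuclideanSpace ℝ (Fin d) →L[ℝ] EuclideanSpace ℝ (Fin d))
    (hAB : Abar.comp B = ContinuousLinearMap.id ℝ _)
    (hBA : B.comp Abar = ContinuousLinearMap.id ℝ _)
    (U : S → EuclideanSpace ℝ (Fin d) →L[ℝ] EuclideanSpace ℝ (Fin d))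
    (hUint : Integrable U μ) (hUmean : (∫ s, U s ∂μ) = 0)
    (ε : ℝ) (hU : ∀ s, ‖U s‖ ≤ ε)
    (A D : S → EuclideanSpace ℝ (Fin d) →L[ℝ] EuclideanSpace ℝ (Fin d))
    (hA : ∀ s, A s = (ContinuousLinearMap.id ℝ _ + U s).comp Abar)
    -- D(s) is the positive semidefinite square root of A(s)ᵀA(s)
    (hDsa : ∀ s, IsSelfAdjoint (D s))
    (hDpos : ∀ s x, 0 ≤ ⟪D s x, x⟫)
    (hDsq : ∀ s, (D s).comp (D s) = (ContinuousLinearMap.adjoint (A s)).comp (A s))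
    (hDint : Integrable D μ) :
    ‖(∫ s, D s ∂μ).comp B‖ ≤ 1 + ε := by
  classical
  have hSne : Nonempty S := by
    by_contra h
    rw [not_nonempty_iff] at h
    have h1 : μ Set.univ = 1 := measure_univ
    have h0 : (Set.univ : Set S) = ∅ := Set.univ_eq_empty_iff.mpr h
    rw [h0, measure_empty] at h1
    exact zero_ne_one h1
  obtain ⟨s₀⟩ := hSne
  have hε : 0 ≤ 1 + ε := by
    have := (norm_nonneg (U s₀)).trans (hU s₀)
    linarith
  -- pointwise norm identity
  have key : ∀ s y, ‖D s y‖ = ‖A s y‖ := by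
    intro s y
    have hadj : ContinuousLinearMap.adjoint (D s) = D s :=
      (ContinuousLinearMap.isSelfAdjoint_iff'.mp (hDsa s))
    have h1 : ‖D s y‖ ^ 2 = ‖A s y‖ ^ 2 := by
      rw [← real_inner_self_eq_norm_sq, ← real_inner_self_eq_norm_sq]
      calc ⟪D s y, D s y⟫ = ⟪ContinuousLinearMap.adjoint (D s) y, D s y⟫ := by rw [hadj]
        _ = ⟪y, D s (D s y)⟫ := ContinuousLinearMap.adjoint_inner_left _ _ _
        _ = ⟪y, ContinuousLinearMap.adjoint (A s) (A s y)⟫ := by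
            have hD2 : D s (D s y) = ContinuousLinearMap.adjoint (A s) (A s y) :=
              congrFun (congrArg DFunLike.coe (hDsq s)) y
            rw [hD2]
        _ = ⟪A s y, A s y⟫ := ContinuousLinearMap.adjoint_inner_right _ _ _
    have h2 : 0 ≤ ‖D s y‖ := norm_nonneg _
    have h3 : 0 ≤ ‖A s y‖ := norm_nonneg _
    nlinarith [h1, h2, h3]
  -- pointwise operator norm bound
  have hpt : ∀ s, ‖(D s).comp B‖ ≤ 1 + ε := by
    intro s
    apply ContinuousLinearMap.opNorm_le_bound _ hε
    intro x
    have hABx : Abar (B x) = x := by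
      have := congrFun (congrArg DFunLike.coe hAB) x
      simpa using this
    have : (D s).comp B x = D s (B x) := rfl
    rw [this, key s (B x), hA s]
    have hAx : ((ContinuousLinearMap.id ℝ _ + U s).comp Abar) (B x) = x + U s x := by
      simp [ContinuousLinearMap.comp_apply, ContinuousLinearMap.add_apply, hABx]
    rw [hAx]
    calc ‖x + U s x‖ ≤ ‖x‖ + ‖U s x‖ := norm_add_le _ _
      _ ≤ ‖x‖ + ε * ‖x‖ := by
          have := (U s).le_opNorm x
          have h2 : ‖U s x‖ ≤ ε * ‖x‖ :=
            this.trans (mul_le_mul_of_nonneg_right (hU s) (norm_nonneg x))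
          linarith
      _ = (1 + ε) * ‖x‖ := by ring
  -- move comp inside integral
  set φ : (EuclideanSpace ℝ (Fin d) →L[ℝ] EuclideanSpace ℝ (Fin d)) →L[ℝ]
      (EuclideanSpace ℝ (Fin d) →L[ℝ] EuclideanSpace ℝ (Fin d)) :=
    (ContinuousLinearMap.compL ℝ _ _ _).flip B with hφ
  have hφapp : ∀ L, φ L = L.comp B := fun L => rfl
  have hcomm : (∫ s, D s ∂μ).comp B = ∫ s, (D s).comp B ∂μ := by
    rw [← hφapp]
    rw [← ContinuousLinearMap.integral_comp_comm φ hDint]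
    simp [hφapp]
  rw [hcomm]
  have hb : ‖∫ s, (D s).comp B ∂μ‖ ≤ ∫ _s, (1 + ε) ∂μ := by
    apply norm_integral_le_of_norm_le (integrable_const _)
    filter_upwards with s using hpt s
  calc ‖∫ s, (D s).comp B ∂μ‖ ≤ ∫ _s, (1 + ε) ∂μ := hb
    _ = 1 + ε := by simp [measure_univ]
end

section
/- Asynchronous Lyapunov coupling: suppose nonnegative sequences (E^k_t) for k = 1,…,K satisfy E^k_{t+1} ≤ (1 − (3/2)α_t)·E^k_t + (α_t/λ^k)²·C^k + (α_t/λ^k)·∑_{k'<k} C^{k,k'}·E^{k'}_t for all t, where α_t < 1, λ^k > 0, C^k ≥ 0, C^{k,k'} ≥ 0. Define weights w^K = 1 and w^k = 2∑_{k'>k} w^{k'} C^{k',k} (λ^{k'})^{−1} for k < K (assume all w^k > 0), and L_t = ∑_k w^k E^k_t. Then L_{t+1} ≤ (1 − α_t)·L_t + α_t²·∑_k w^k C^k (λ^k)^{−2}. -/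
open Finset

/-!
Weight module `k` by `w k` and sum the recursions. Exchanging the order of the double sum, the
coupling terms through which the modules `k' > k` see `E k` add up to `α · ∑_{k' > k} w k' C k' k / λ k'`
times `E k`, which by the choice of weights is at most `(α / 2) · w k · E k`. So the coupling
consumes `α / 2` of the contraction `1 − (3/2) α`, leaving `1 − α`.
-/

section Coupling

variable {ι : Type*} [Fintype ι] [LinearOrder ι]

theorem Finset.sum_sum_filter_lt_comm {M : Type*} [AddCommMonoid M] (f : ι → ι → M) :
    ∑ k, ∑ k' ∈ univ.filter (· < k), f k k' = ∑ k', ∑ k ∈ univ.filter (k' < ·), f k k' :=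
  Finset.sum_comm' (by simp)

theorem sum_filter_gt_le_half_of_weights [OrderTop ι] {w : ι → ℝ} {c : ι → ι → ℝ}
    (htop : 0 ≤ w ⊤) (hw : ∀ k, k ≠ ⊤ → w k = 2 * ∑ k' ∈ univ.filter (k < ·), c k' k) (k : ι) :
    ∑ k' ∈ univ.filter (k < ·), c k' k ≤ w k / 2 := by
  rcases eq_or_ne k ⊤ with rfl | hk
  · simpa [not_top_lt] using div_nonneg htop zero_le_two
  · linarith [hw k hk]

theorem sum_coupling_le_half_weighted_sum [OrderTop ι] {w e : ι → ℝ} {c : ι → ι → ℝ}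
    (he : ∀ k, 0 ≤ e k) (htop : 0 ≤ w ⊤)
    (hw : ∀ k, k ≠ ⊤ → w k = 2 * ∑ k' ∈ univ.filter (k < ·), c k' k) :
    ∑ k, ∑ k' ∈ univ.filter (· < k), c k k' * e k' ≤ (1 / 2) * ∑ k, w k * e k := by
  rw [Finset.sum_sum_filter_lt_comm, mul_sum]
  refine sum_le_sum fun k _ => ?_
  rw [← sum_mul]
  calc (∑ k' ∈ univ.filter (k < ·), c k' k) * e k ≤ w k / 2 * e k :=
        mul_le_mul_of_nonneg_right (sum_filter_gt_le_half_of_weights htop hw k) (he k)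
    _ = 1 / 2 * (w k * e k) := by ring

end Coupling

theorem asynchronous_lyapunov_coupling_general
    (K : ℕ)
    (E : Fin (K + 1) → ℕ → ℝ) (hE : ∀ k τ, 0 ≤ E k τ)
    (α : ℕ → ℝ) (hα : ∀ τ, 0 < α τ ∧ α τ < 1)
    (lam : Fin (K + 1) → ℝ)
    (C : Fin (K + 1) → ℝ)
    (Ccross : Fin (K + 1) → Fin (K + 1) → ℝ)
    (hrec : ∀ k τ, E k (τ + 1) ≤ (1 - (3 / 2) * α τ) * E k τ + (α τ / lam k) ^ 2 * C k +
      (α τ / lam k) * ∑ k' ∈ univ.filter (· < k), Ccross k k' * E k' τ)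
    (w : Fin (K + 1) → ℝ) (hwpos : ∀ k, 0 < w k)
    (hwlast : w (Fin.last K) = 1)
    (hw : ∀ k, k ≠ Fin.last K →
      w k = 2 * ∑ k' ∈ univ.filter (k < ·), w k' * Ccross k' k / lam k') :
    ∀ τ, (∑ k, w k * E k (τ + 1)) ≤
      (1 - α τ) * (∑ k, w k * E k τ) + (α τ) ^ 2 * ∑ k, w k * C k / (lam k) ^ 2 := by
  intro τ
  have hcoupling := sum_coupling_le_half_weighted_sum (w := w) (c := fun k k' => w k * Ccross k k' / lam k)
    (fun k => hE k τ) (by simp [Fin.top_eq_last, hwlast]) (by simpa [Fin.top_eq_last] using hw)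
  calc ∑ k, w k * E k (τ + 1)
      ≤ ∑ k, w k * ((1 - (3 / 2) * α τ) * E k τ + (α τ / lam k) ^ 2 * C k +
          (α τ / lam k) * ∑ k' ∈ univ.filter (· < k), Ccross k k' * E k' τ) :=
        sum_le_sum fun k _ => mul_le_mul_of_nonneg_left (hrec k τ) (hwpos k).le
    _ = (1 - (3 / 2) * α τ) * (∑ k, w k * E k τ) + α τ ^ 2 * ∑ k, w k * C k / lam k ^ 2 +
          α τ * ∑ k, ∑ k' ∈ univ.filter (· < k), w k * Ccross k k' / lam k * E k' τ := by
        simp only [mul_add, mul_sum, sum_add_distrib]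
        congr 1; congr 1
        all_goals refine sum_congr rfl fun k _ => ?_
        · ring
        · ring
        · exact sum_congr rfl fun k' _ => by ring
    _ ≤ (1 - α τ) * (∑ k, w k * E k τ) + α τ ^ 2 * ∑ k, w k * C k / lam k ^ 2 := by
        linarith [mul_le_mul_of_nonneg_left hcoupling (hα τ).1.le]

/-- Uni-timescale Lyapunov analysis for asynchronously coupled learning modules:
the weighted Lyapunov function contracts at rate `1 − α_t` with an `α_t²` noise term. -/
theorem asynchronous_lyapunov_coupling
    (K : ℕ)
    (E : Fin (K + 1) → ℕ → ℝ) (hE : ∀ k τ, 0 ≤ E k τ)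
    (α : ℕ → ℝ) (hα : ∀ τ, 0 < α τ ∧ α τ < 1)
    (lam : Fin (K + 1) → ℝ) (hlam : ∀ k, 0 < lam k)
    (C : Fin (K + 1) → ℝ) (hC : ∀ k, 0 ≤ C k)
    (Ccross : Fin (K + 1) → Fin (K + 1) → ℝ) (hCcross : ∀ k k', 0 ≤ Ccross k k')
    (hrec : ∀ k τ, E k (τ + 1) ≤ (1 - (3 / 2) * α τ) * E k τ + (α τ / lam k) ^ 2 * C k +
      (α τ / lam k) * ∑ k' ∈ univ.filter (· < k), Ccross k k' * E k' τ)
    (w : Fin (K + 1) → ℝ) (hwpos : ∀ k, 0 < w k)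
    (hwlast : w (Fin.last K) = 1)
    (hw : ∀ k, k ≠ Fin.last K →
      w k = 2 * ∑ k' ∈ univ.filter (k < ·), w k' * Ccross k' k / lam k') :
    ∀ τ, (∑ k, w k * E k (τ + 1)) ≤
      (1 - α τ) * (∑ k, w k * E k τ) + (α τ) ^ 2 * ∑ k, w k * C k / (lam k) ^ 2 :=
  asynchronous_lyapunov_coupling_general K E hE α hα lam C Ccross hrec w hwpos hwlast hw
end
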